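/- Let d ≥ 1. Let ρ₀ : ℝ^d → ℝ be nonnegative, Lipschitz continuous with constant L, supported in a compact set D ⊆ ℝ^d. Let φ : ℝ^d → ℝ be a smooth nonnegative function supported in {x : |x|_∞ ≤ 1/2}, and for ε > 0 set φ_ε(x) = ε^{−d} φ(x/ε). Let Θ_h = {θ ∈ ℤ^d : hθ ∈ D}. Then for all 0 < h ≤ ε ≤ 1 and every x ∈ ℝ^d, | Σ_{θ ∈ Θ_h} h^d (ρ₀(hθ) − ρ₀(x)) φ_ε(x − hθ) | ≤ 3^d L ‖φ‖_∞ ε. -/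

import Mathlib

open MeasureTheory
open scoped NNReal

/-- The scaled lattice point `hθ ∈ ℝ^d` associated with `θ ∈ ℤ^d`. -/
def latticePt (d : ℕ) (h : ℝ) (θ : Fin d → ℤ) : EuclideanSpace ℝ (Fin d) :=
  WithLp.toLp 2 (fun i => h * (θ i : ℝ))

/-- `d·2^d ≤ 2·3^d`. -/
lemma aux_d_two_pow_le (d : ℕ) : (d : ℝ) * 2 ^ d ≤ 2 * 3 ^ d := by
  have h32 : 1 + (d : ℝ) * (1 / 2) ≤ (3 / 2) ^ d := by
    have := one_add_mul_le_pow (by norm_num : (-2 : ℝ) ≤ 1 / 2) d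
    exact this.trans_eq (by norm_num)
  have h3 : (3 : ℝ) ^ d = 2 ^ d * (3 / 2) ^ d := by
    rw [← mul_pow]; norm_num
  have h2 : (0 : ℝ) ≤ 2 ^ d := by positivity
  nlinarith [mul_le_mul_of_nonneg_left h32 h2]

/-- Generic bound for a finitely supported sum over a set. -/
lemma aux_finsum_abs_le {α : Type*} (T : Set α) (F : α → ℝ) (B : Finset α) (A K : ℝ)
    (hA0 : 0 ≤ A)
    (hsupp : T ∩ Function.support F ⊆ ↑B)
    (hterm : ∀ θ ∈ T ∩ Function.support F, |F θ| ≤ A)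
    (hcard : (B.card : ℝ) * A ≤ K) :
    |∑ᶠ θ ∈ T, F θ| ≤ K := by
  have hfin : (T ∩ Function.support F).Finite :=
    Set.Finite.subset B.finite_toSet hsupp
  rw [finsum_mem_eq_sum F hfin]
  set S : Finset α := hfin.toFinset with hSdef
  have hSmem : ∀ θ ∈ S, θ ∈ T ∩ Function.support F := by
    intro θ hθ
    rwa [hSdef, Set.Finite.mem_toFinset] at hθ
  have hSB : S ⊆ B := fun θ hθ => hsupp (hSmem θ hθ)
  calc |∑ θ ∈ S, F θ| ≤ ∑ θ ∈ S, |F θ| := Finset.abs_sum_le_sum_abs _ _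
    _ ≤ S.card • A := Finset.sum_le_card_nsmul _ _ _ fun θ hθ => hterm θ (hSmem θ hθ)
    _ = (S.card : ℝ) * A := nsmul_eq_mul _ _
    _ ≤ (B.card : ℝ) * A := by
        apply mul_le_mul_of_nonneg_right _ hA0
        exact_mod_cast Finset.card_le_card hSB
    _ ≤ K := hcard

/-- Pointwise comparison of the regularized empirical measure
`ρ_h(x) = Σ_θ h^d ρ₀(hθ) φ_ε(x - hθ)` with the intermediate density
`ρ₀(x) Σ_θ h^d φ_ε(x - hθ)`: the difference is at most `3^d L ‖φ‖_∞ ε`. -/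
theorem empirical_vs_intermediate_pointwise (d : ℕ) (hd : 1 ≤ d)
    (D : Set (EuclideanSpace ℝ (Fin d))) (hD : IsCompact D)
    (ρ₀ : EuclideanSpace ℝ (Fin d) → ℝ) (hρ0 : ∀ x, 0 ≤ ρ₀ x)
    (L : ℝ≥0) (hρL : LipschitzWith L ρ₀)
    (hρsupp : ∀ x, x ∉ D → ρ₀ x = 0)
    (φ : EuclideanSpace ℝ (Fin d) → ℝ) (hφ : ContDiff ℝ (⊤ : ℕ∞) φ) (hφ0 : ∀ x, 0 ≤ φ x)
    (hφsupp : ∀ x : EuclideanSpace ℝ (Fin d), (∃ i, 1 / 2 < |x i|) → φ x = 0)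
    (h ε : ℝ) (hh : 0 < h) (hhε : h ≤ ε) (hε1 : ε ≤ 1) :
    ∀ x : EuclideanSpace ℝ (Fin d),
      |∑ᶠ θ ∈ {θ : Fin d → ℤ | latticePt d h θ ∈ D},
          h ^ d * (ρ₀ (latticePt d h θ) - ρ₀ x)
            * ((ε ^ d)⁻¹ * φ (ε⁻¹ • (x - latticePt d h θ)))|
        ≤ 3 ^ d * (L : ℝ) * (⨆ y : EuclideanSpace ℝ (Fin d), |φ y|) * ε := by
  intro x
  have hε : (0 : ℝ) < ε := hh.trans_le hhε
  -- the sup-norm of φ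
  set M : ℝ := ⨆ y : EuclideanSpace ℝ (Fin d), |φ y| with hMdef
  -- φ has compact support
  have hK : IsCompact {y : EuclideanSpace ℝ (Fin d) | ∀ i, |y i| ≤ 1 / 2} := by
    apply Metric.isCompact_of_isClosed_isBounded
    · have heq : {y : EuclideanSpace ℝ (Fin d) | ∀ i, |y i| ≤ 1 / 2} =
        ⋂ i, {y : EuclideanSpace ℝ (Fin d) | |y i| ≤ 1 / 2} := by
        ext y; simp [Set.mem_iInter]
      rw [heq]
      refine isClosed_iInter fun i => isClosed_le ?_ continuous_const
      exact ((PiLp.proj (𝕜 := ℝ) 2 (fun _ : Fin d => ℝ) i).continuous).abs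
    · rw [Metric.isBounded_iff_subset_closedBall 0]
      refine ⟨(d : ℝ), fun y hy => ?_⟩
      simp only [Metric.mem_closedBall, dist_zero_right]
      rw [EuclideanSpace.norm_eq]
      have hsum : ∑ i, ‖y i‖ ^ 2 ≤ (d : ℝ) ^ 2 := by
        calc ∑ i, ‖y i‖ ^ 2 ≤ ∑ _i : Fin d, (1 / 2 : ℝ) ^ 2 := by
              refine Finset.sum_le_sum fun i _ => ?_
              have := hy i
              rw [Real.norm_eq_abs]
              nlinarith [abs_nonneg (y i)]
          _ = (d : ℝ) * (1 / 2) ^ 2 := by simp [Finset.sum_const, mul_comm]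
          _ ≤ (d : ℝ) ^ 2 := by
              have : (1 : ℝ) ≤ (d : ℝ) := by exact_mod_cast hd
              nlinarith
      calc Real.sqrt (∑ i, ‖y i‖ ^ 2) ≤ Real.sqrt ((d : ℝ) ^ 2) :=
            Real.sqrt_le_sqrt hsum
        _ = (d : ℝ) := Real.sqrt_sq (by positivity)
  have hcs : HasCompactSupport φ := by
    apply HasCompactSupport.intro hK
    intro y hy
    apply hφsupp
    simpa [not_forall, not_le] using hy
  have hMb : BddAbove (Set.range fun y : EuclideanSpace ℝ (Fin d) => |φ y|) :=
    (hφ.continuous.abs).bddAbove_range_of_hasCompactSupport hcs.abs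
  have hM : ∀ y, |φ y| ≤ M := fun y => le_ciSup hMb y
  have hM0 : 0 ≤ M := le_trans (abs_nonneg _) (hM 0)
  -- the bounding finset and term bound
  set B : Finset (Fin d → ℤ) := Fintype.piFinset fun i =>
    Finset.Icc ⌈(x i - ε / 2) / h⌉ ⌊(x i + ε / 2) / h⌋ with hBdef
  set A : ℝ := h ^ d * ((L : ℝ) * ((d : ℝ) * ε / 2)) * ((ε ^ d)⁻¹ * M) with hAdef
  have hA0 : 0 ≤ A := by
    apply mul_nonneg
    · apply mul_nonneg (by positivity)
      exact mul_nonneg L.coe_nonneg (by positivity)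
    · exact mul_nonneg (by positivity) hM0
  apply aux_finsum_abs_le _ _ B A _ hA0
  · -- support is inside the cube B
    rintro θ ⟨-, hθ⟩
    -- first: θ must satisfy the coordinatewise bound
    have hC : ∀ i, |x i - h * (θ i : ℝ)| ≤ ε / 2 := by
      by_contra hc
      push_neg at hc
      obtain ⟨i, hi⟩ := hc
      apply hθ
      have hφz : φ (ε⁻¹ • (x - latticePt d h θ)) = 0 := by
        apply hφsupp
        refine ⟨i, ?_⟩
        have harg : (ε⁻¹ • (x - latticePt d h θ)) i = ε⁻¹ * (x i - h * (θ i : ℝ)) := by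
          rw [PiLp.smul_apply, PiLp.sub_apply]
          rfl
        rw [harg, abs_mul, abs_of_pos (inv_pos.mpr hε)]
        calc (1 : ℝ) / 2 = ε⁻¹ * (ε / 2) := by field_simp
          _ < ε⁻¹ * |x i - h * (θ i : ℝ)| :=
              mul_lt_mul_of_pos_left hi (inv_pos.mpr hε)
      simp [hφz]
    simp only [hBdef, Finset.mem_coe, Fintype.mem_piFinset, Finset.mem_Icc]
    intro i
    have hi := hC i
    rw [abs_le] at hi
    refine ⟨Int.ceil_le.mpr ?_, Int.le_floor.mpr ?_⟩
    · rw [div_le_iff₀ hh]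
      have : x i - ε / 2 ≤ h * (θ i : ℝ) := by linarith [hi.2]
      linarith [this]
    · rw [le_div_iff₀ hh]
      have : h * (θ i : ℝ) ≤ x i + ε / 2 := by linarith [hi.1]
      linarith [this]
  · -- each contributing term is at most A
    rintro θ ⟨-, hθ⟩
    have hC : ∀ i, |x i - h * (θ i : ℝ)| ≤ ε / 2 := by
      by_contra hc
      push_neg at hc
      obtain ⟨i, hi⟩ := hc
      apply hθ
      have hφz : φ (ε⁻¹ • (x - latticePt d h θ)) = 0 := by
        apply hφsupp
        refine ⟨i, ?_⟩
        have harg : (ε⁻¹ • (x - latticePt d h θ)) i = ε⁻¹ * (x i - h * (θ i : ℝ)) := by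
          rw [PiLp.smul_apply, PiLp.sub_apply]
          rfl
        rw [harg, abs_mul, abs_of_pos (inv_pos.mpr hε)]
        calc (1 : ℝ) / 2 = ε⁻¹ * (ε / 2) := by field_simp
          _ < ε⁻¹ * |x i - h * (θ i : ℝ)| :=
              mul_lt_mul_of_pos_left hi (inv_pos.mpr hε)
      simp [hφz]
    have hdist : dist (latticePt d h θ) x ≤ (d : ℝ) * ε / 2 := by
      rw [EuclideanSpace.dist_eq]
      have hsum : ∑ i, dist (latticePt d h θ i) (x i) ^ 2 ≤ ((d : ℝ) * ε / 2) ^ 2 := by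
        calc ∑ i, dist (latticePt d h θ i) (x i) ^ 2
            ≤ ∑ _i : Fin d, (ε / 2) ^ 2 := by
              refine Finset.sum_le_sum fun i _ => ?_
              have hi := hC i
              have hdi : dist (latticePt d h θ i) (x i) = |x i - h * (θ i : ℝ)| := by
                rw [Real.dist_eq, abs_sub_comm]
                rfl
              rw [hdi]
              have h0 : (0 : ℝ) ≤ |x i - h * (θ i : ℝ)| := abs_nonneg _
              nlinarith
          _ = (d : ℝ) * (ε / 2) ^ 2 := by simp [Finset.sum_const, mul_comm]
          _ ≤ ((d : ℝ) * ε / 2) ^ 2 := by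
              have h1 : (1 : ℝ) ≤ (d : ℝ) := by exact_mod_cast hd
              nlinarith
      calc Real.sqrt (∑ i, dist (latticePt d h θ i) (x i) ^ 2)
          ≤ Real.sqrt (((d : ℝ) * ε / 2) ^ 2) := Real.sqrt_le_sqrt hsum
        _ = (d : ℝ) * ε / 2 := Real.sqrt_sq (by positivity)
    have hlip : |ρ₀ (latticePt d h θ) - ρ₀ x| ≤ (L : ℝ) * ((d : ℝ) * ε / 2) := by
      have hL := hρL.dist_le_mul (latticePt d h θ) x
      rw [Real.dist_eq] at hL
      calc |ρ₀ (latticePt d h θ) - ρ₀ x| ≤ (L : ℝ) * dist (latticePt d h θ) x := hL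
        _ ≤ (L : ℝ) * ((d : ℝ) * ε / 2) :=
            mul_le_mul_of_nonneg_left hdist L.coe_nonneg
    have habs : |h ^ d * (ρ₀ (latticePt d h θ) - ρ₀ x)
          * ((ε ^ d)⁻¹ * φ (ε⁻¹ • (x - latticePt d h θ)))|
        = h ^ d * |ρ₀ (latticePt d h θ) - ρ₀ x|
          * ((ε ^ d)⁻¹ * |φ (ε⁻¹ • (x - latticePt d h θ))|) := by
      simp only [abs_mul]
      rw [abs_of_nonneg (by positivity : (0 : ℝ) ≤ h ^ d),
        abs_of_nonneg (by positivity : (0 : ℝ) ≤ (ε ^ d)⁻¹)]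
    rw [habs, hAdef]
    apply mul_le_mul
    · exact mul_le_mul_of_nonneg_left hlip (by positivity)
    · exact mul_le_mul_of_nonneg_left (hM _) (by positivity)
    · exact mul_nonneg (by positivity) (abs_nonneg _)
    · apply mul_nonneg (by positivity)
      exact mul_nonneg L.coe_nonneg (by positivity)
  · -- cardinality bound
    have hone : ∀ i : Fin d,
        ((Finset.Icc ⌈(x i - ε / 2) / h⌉ ⌊(x i + ε / 2) / h⌋).card : ℝ) ≤ 2 * ε / h := by
      intro i
      have h2εh : (0 : ℝ) < 2 * ε / h := by positivity
      rw [Int.card_Icc]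
      set a : ℝ := (x i - ε / 2) / h with hadef
      set b : ℝ := (x i + ε / 2) / h with hbdef
      set z : ℤ := ⌊b⌋ + 1 - ⌈a⌉ with hz
      rcases le_or_gt z 0 with h0 | h0
      · rw [Int.toNat_of_nonpos h0]; simpa using h2εh.le
      · have htn : (z.toNat : ℤ) = z := Int.toNat_of_nonneg h0.le
        have hcast : ((z.toNat : ℕ) : ℝ) = (z : ℝ) := by exact_mod_cast htn
        rw [hcast]
        have hfl : ((⌊b⌋ : ℤ) : ℝ) ≤ b := Int.floor_le b
        have hce : a ≤ ((⌈a⌉ : ℤ) : ℝ) := Int.le_ceil a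
        have hdiff : b - a = ε / h := by
          rw [hadef, hbdef,
            show (x i + ε / 2) / h - (x i - ε / 2) / h
              = ((x i + ε / 2) - (x i - ε / 2)) / h from div_sub_div_same _ _ _]
          congr 1; ring
        have h1εh : (1 : ℝ) ≤ ε / h := (one_le_div hh).mpr hhε
        have h2 : (2 : ℝ) * ε / h = 2 * (ε / h) := by ring
        rw [hz]
        push_cast
        linarith
    have hcard : ((B.card : ℕ) : ℝ) ≤ (2 * ε / h) ^ d := by
      rw [hBdef, Fintype.card_piFinset]
      push_cast
      calc (∏ i : Fin d, ((Finset.Icc ⌈(x i - ε / 2) / h⌉ ⌊(x i + ε / 2) / h⌋).card : ℝ))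
          ≤ ∏ _i : Fin d, (2 * ε / h) :=
            Finset.prod_le_prod (fun i _ => Nat.cast_nonneg _) (fun i _ => hone i)
        _ = (2 * ε / h) ^ d := by simp [Finset.prod_const, div_pow]
    have hhd : (h : ℝ) ^ d ≠ 0 := by positivity
    have hεd : (ε : ℝ) ^ d ≠ 0 := by positivity
    have hpow : (2 * ε / h) ^ d * A = 2 ^ d * ((L : ℝ) * ((d : ℝ) * ε / 2) * M) := by
      rw [hAdef, div_pow, mul_pow]
      field_simp
    calc (B.card : ℝ) * A ≤ (2 * ε / h) ^ d * A := mul_le_mul_of_nonneg_right hcard hA0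
      _ = 2 ^ d * ((L : ℝ) * ((d : ℝ) * ε / 2) * M) := hpow
      _ ≤ 3 ^ d * (L : ℝ) * M * ε := by
          have hkey := aux_d_two_pow_le d
          have hnn : (0 : ℝ) ≤ (L : ℝ) * M * ε / 2 := by positivity
          nlinarith [mul_le_mul_of_nonneg_right hkey hnn]
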